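/- Suppose the kernel functions K_1,…,K_n are singular and J is an arbitrary n-field function, and let j ∈ {0,1,…,n}. For every q > 0 and every y ∈ S̄ with m_j(y) ≠ -∞ there exist η > 0 and a set Z ⊆ I_j(y) such that for every x ∈ S̄ with ‖x - y‖ ≤ η: (i) Z ⊆ I_j(x) and |t - x_i| ≥ η for all t ∈ Z and all i = 1,…,n (in particular Z lies in the interior of I_j(x) relative to [0,1]); (ii) m_j(x) = sup_{t ∈ Z} F(x,t); (iii) F(x,t) ≥ m_j(x) - q > -∞ for every t ∈ Z. -/

import Mathlib

open Set Filter
open scoped BigOperators Topology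

noncomputable section

/-- The real part of an extended-real-valued function. -/
def toR (K : ℝ → EReal) : ℝ → ℝ := fun t => (K t).toReal

/-- A *kernel function*: finite-valued, continuous and concave on `[-1,0)` and `(0,1]`,
never `+∞`, and with coinciding one-sided limits at `0` (given by the value `K 0`). -/
structure IsKernel (K : ℝ → EReal) : Prop where
  ne_top : ∀ t, K t ≠ ⊤
  finite_left : ∀ t ∈ Ico (-1:ℝ) 0, K t ≠ ⊥
  finite_right : ∀ t ∈ Ioc (0:ℝ) 1, K t ≠ ⊥
  cont_left : ContinuousOn (toR K) (Ico (-1:ℝ) 0)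
  cont_right : ContinuousOn (toR K) (Ioc (0:ℝ) 1)
  concave_left : ConcaveOn ℝ (Ico (-1:ℝ) 0) (toR K)
  concave_right : ConcaveOn ℝ (Ioc (0:ℝ) 1) (toR K)
  tendsto_left : Tendsto K (nhdsWithin 0 (Iio 0)) (nhds (K 0))
  tendsto_right : Tendsto K (nhdsWithin 0 (Ioi 0)) (nhds (K 0))

/-- Left one-sided derivative. -/
def Dm (f : ℝ → ℝ) (t : ℝ) : ℝ := derivWithin f (Iio t) t

/-- Right one-sided derivative. -/
def Dp (f : ℝ → ℝ) (t : ℝ) : ℝ := derivWithin f (Ioi t) t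

/-- Condition (PM_c): periodized `c`-monotonicity. -/
def PMcond (K : ℝ → EReal) (c : ℝ) : Prop :=
  ∀ t ∈ Ioo (0:ℝ) 1, c ≤ Dm (toR K) t - Dm (toR K) (t - 1)

/-- An *n-field function*: bounded above, never `+∞`, finite at more than `n` points of
`[0,1]`, where the endpoints count with weight `1/2`. -/
structure IsNField (n : ℕ) (J : ℝ → EReal) : Prop where
  ne_top : ∀ t, J t ≠ ⊤
  bdd : ∃ M : ℝ, ∀ t ∈ Icc (0:ℝ) 1, J t ≤ (M : EReal)
  count : (∃ T : Finset ℝ, ↑T ⊆ {t | t ∈ Ioo (0:ℝ) 1 ∧ J t ≠ ⊥} ∧ n + 1 ≤ T.card) ∨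
    ((∃ T : Finset ℝ, ↑T ⊆ {t | t ∈ Ioo (0:ℝ) 1 ∧ J t ≠ ⊥} ∧ n ≤ T.card) ∧
      (J 0 ≠ ⊥ ∨ J 1 ≠ ⊥))

/-- The open simplex `S`. -/
def openSimplex (n : ℕ) : Set (Fin n → ℝ) :=
  {y | StrictMono y ∧ ∀ i, y i ∈ Ioo (0:ℝ) 1}

/-- The closed simplex `S̄`. -/
def closedSimplex (n : ℕ) : Set (Fin n → ℝ) :=
  {y | Monotone y ∧ ∀ i, y i ∈ Icc (0:ℝ) 1}

/-- The left endpoint `y_j` of `I_j(y)`, with the convention `y_0 = 0`. -/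
def nodeLo {n : ℕ} (y : Fin n → ℝ) (j : ℕ) : ℝ :=
  if h : 0 < j ∧ j ≤ n then y ⟨j - 1, by omega⟩ else 0

/-- The right endpoint `y_{j+1}` of `I_j(y)`, with the convention `y_{n+1} = 1`. -/
def nodeHi {n : ℕ} (y : Fin n → ℝ) (j : ℕ) : ℝ :=
  if h : j < n then y ⟨j, h⟩ else 1

/-- The interval `I_j(y) = [y_j, y_{j+1}]`. -/
def Ij {n : ℕ} (y : Fin n → ℝ) (j : ℕ) : Set ℝ := Icc (nodeLo y j) (nodeHi y j)

/-- The sum of translates function `F(y,t) = J(t) + ∑ K_j(t - y_j)`. -/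
def SOT {n : ℕ} (K : Fin n → ℝ → EReal) (J : ℝ → EReal) (y : Fin n → ℝ) (t : ℝ) : EReal :=
  J t + ∑ i, K i (t - y i)

/-- The interval maximum `m_j(y) = sup_{t ∈ I_j(y)} F(y,t)`. -/
def mj {n : ℕ} (K : Fin n → ℝ → EReal) (J : ℝ → EReal) (y : Fin n → ℝ) (j : ℕ) : EReal :=
  ⨆ t ∈ Ij y j, SOT K J y t

/-- The regularity set `Y`. -/
def regSet {n : ℕ} (K : Fin n → ℝ → EReal) (J : ℝ → EReal) : Set (Fin n → ℝ) :=
  {y ∈ openSimplex n | ∀ j ≤ n, mj K J y j ≠ ⊥}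

/-- The difference function `Φ(y) = (m_1 - m_0, …, m_n - m_{n-1})`. -/
def PhiFun {n : ℕ} (K : Fin n → ℝ → EReal) (J : ℝ → EReal) (y : Fin n → ℝ) : Fin n → ℝ :=
  fun i => (mj K J y ((i : ℕ) + 1)).toReal - (mj K J y (i : ℕ)).toReal

/-- A map between (pseudo)metric spaces is *locally bi-Lipschitz* if every point has a
neighborhood on which the map is a bi-Lipschitz homeomorphism onto its image. -/
def LocallyBiLipschitz {α β : Type*} [PseudoMetricSpace α] [PseudoMetricSpace β]
    (f : α → β) : Prop :=
  ∀ x : α, ∃ U ∈ 𝓝 x, ∃ c C : ℝ, 0 < c ∧ ∀ a ∈ U, ∀ b ∈ U,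
    c * dist a b ≤ dist (f a) (f b) ∧ dist (f a) (f b) ≤ C * dist a b

/-- The relative interior of `[a,b] ⊆ [0,1]` in the space `[0,1]`. -/
def relIntIcc (a b : ℝ) : Set ℝ :=
  (if a = 0 then Ici a else Ioi a) ∩ (if b = 1 then Iic b else Iio b)

/-- Condition `(∞₊)`. -/
def CondInfPlus (J : ℝ → EReal) : Prop :=
  J 0 = ⊥ ∧ Tendsto J (nhdsWithin 0 (Ioi 0)) (nhds ⊥)

/-- Condition `(∞₋)`. -/
def CondInfMinus (J : ℝ → EReal) : Prop :=
  J 1 = ⊥ ∧ Tendsto J (nhdsWithin 1 (Iio 1)) (nhds ⊥)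

/-- Fenton's cusp condition `(∞'₊)`. -/
def CuspPlus (J : ℝ → EReal) : Prop :=
  ∀ M : ℝ, ∃ δ > (0:ℝ), ∀ s t : ℝ, 0 ≤ s → s < t → t ≤ δ →
    J s ≠ ⊥ → J t ≠ ⊥ → M ≤ ((J t).toReal - (J s).toReal) / (t - s)

/-- Fenton's cusp condition `(∞'₋)`. -/
def CuspMinus (J : ℝ → EReal) : Prop :=
  ∀ M : ℝ, ∃ δ > (0:ℝ), ∀ t s : ℝ, 1 - δ ≤ t → t < s → s ≤ 1 →
    J s ≠ ⊥ → J t ≠ ⊥ → ((J t).toReal - (J s).toReal) / (t - s) ≤ -M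

/-- `L : [0,1] → [0,∞)` is log-concave:
`L(λs + (1-λ)t) ≥ L(s)^λ L(t)^{1-λ}`. -/
def LogConcaveOn01 (L : ℝ → ℝ) : Prop :=
  ∀ s ∈ Icc (0:ℝ) 1, ∀ t ∈ Icc (0:ℝ) 1, ∀ l ∈ Icc (0:ℝ) 1,
    L s ^ l * L t ^ (1 - l) ≤ L (l * s + (1 - l) * t)


/-!
Near a node `x_i` the singular kernel `K_i` pushes `F(x,·)` below `m_j(y) - q`, uniformly in `x`,
because all other terms are bounded above. Away from the nodes the kernels are uniformly continuous,
so moving `x` by at most `η` changes `F(x,t)` by at most `q/8`. Hence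
`Z = {t ∈ I_j(y) : |t - y_i| ≥ δ/2 for all i, F(y,t) ≥ m_j(y) - q/2}` works: every other point of
`I_j(x)` is either near a node of `x` or has `F(x,t) ≤ m_j(y) - 3q/8`, while `Z` contains an almost
maximiser of `F(y,·)`, at which `F(x,·) ≥ m_j(y) - q/4`.
-/

theorem EReal.coe_finset_sum {ι : Type*} (s : Finset ι) (f : ι → ℝ) :
    ((∑ i ∈ s, f i : ℝ) : EReal) = ∑ i ∈ s, (f i : EReal) :=
  map_sum (⟨⟨(↑), EReal.coe_zero⟩, EReal.coe_add⟩ : ℝ →+ EReal) f s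

theorem biSup_eq_biSup_of_forall_notMem_le {α β : Type*} [CompleteLattice β] {f : α → β}
    {s Z : Set α} {c : β} (hZs : Z ⊆ s) (hc : c ≤ ⨆ t ∈ Z, f t)
    (hout : ∀ t ∈ s, t ∉ Z → f t ≤ c) :
    ⨆ t ∈ s, f t = ⨆ t ∈ Z, f t := by
  refine le_antisymm (iSup₂_le fun t ht => ?_) (biSup_mono hZs)
  by_cases htZ : t ∈ Z
  · exact le_iSup₂ (f := fun t _ => f t) t htZ
  · exact (hout t ht htZ).trans hc

theorem sub_mem_Icc_neg_one_one {a b : ℝ} (ha : a ∈ Icc (0 : ℝ) 1) (hb : b ∈ Icc (0 : ℝ) 1) :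
    b - a ∈ Icc (-1 : ℝ) 1 :=
  ⟨by linarith [ha.2, hb.1], by linarith [ha.1, hb.2]⟩

theorem sub_mem_Icc_sdiff_zero {a b δ : ℝ} (ha : a ∈ Icc (0 : ℝ) 1) (hb : b ∈ Icc (0 : ℝ) 1)
    (hδ : 0 < δ) (hab : δ ≤ |b - a|) : b - a ∈ Icc (-1 : ℝ) 1 \ {0} :=
  ⟨sub_mem_Icc_neg_one_one ha hb, fun h0 => by
    rw [show b - a = 0 from h0, abs_zero] at hab
    linarith⟩

namespace IsKernel

variable {K : ℝ → EReal}

theorem eq_coe_toR (hK : IsKernel K) {s : ℝ} (hs : s ∈ Icc (-1 : ℝ) 1 \ {0}) :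
    K s = toR K s := by
  obtain ⟨⟨h1, h2⟩, h0⟩ := hs
  rcases lt_or_gt_of_ne h0 with h | h
  · exact (EReal.coe_toReal (hK.ne_top s) (hK.finite_left s ⟨h1, h⟩)).symm
  · exact (EReal.coe_toReal (hK.ne_top s) (hK.finite_right s ⟨h, h2⟩)).symm

theorem continuousOn (hK : IsKernel K) : ContinuousOn K (Icc (-1) 1) := by
  have hleft : ContinuousOn K (Ico (-1) 0) :=
    (continuous_coe_real_ereal.comp_continuousOn hK.cont_left).congr fun s hs =>
      hK.eq_coe_toR ⟨⟨hs.1, hs.2.le.trans zero_le_one⟩, hs.2.ne⟩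
  have hright : ContinuousOn K (Ioc 0 1) :=
    (continuous_coe_real_ereal.comp_continuousOn hK.cont_right).congr fun s hs =>
      hK.eq_coe_toR ⟨⟨neg_one_lt_zero.le.trans hs.1.le, hs.2⟩, hs.1.ne'⟩
  intro s hs
  rcases lt_trichotomy s 0 with h | rfl | h
  · refine (hleft s ⟨hs.1, h⟩).mono_of_mem_nhdsWithin ?_
    exact mem_of_superset (inter_mem_nhdsWithin _ (Iio_mem_nhds h)) fun u hu => ⟨hu.1.1, hu.2⟩
  · exact (continuousAt_iff_continuous_left'_right'.2
      ⟨hK.tendsto_left, hK.tendsto_right⟩).continuousWithinAt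
  · refine (hright s ⟨h, hs.2⟩).mono_of_mem_nhdsWithin ?_
    exact mem_of_superset (inter_mem_nhdsWithin _ (Ioi_mem_nhds h)) fun u hu => ⟨hu.2, hu.1.2⟩

theorem exists_forall_le (hK : IsKernel K) : ∃ C : ℝ, ∀ s ∈ Icc (-1 : ℝ) 1, K s ≤ C := by
  obtain ⟨s₀, -, hmax⟩ :=
    isCompact_Icc.exists_isMaxOn (nonempty_Icc.2 (by norm_num)) hK.continuousOn
  exact ⟨(K s₀).toReal, fun s hs => (hmax hs).trans (EReal.le_coe_toReal (hK.ne_top s₀))⟩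

theorem continuousOn_toR (hK : IsKernel K) : ContinuousOn (toR K) (Icc (-1) 1 \ {0}) :=
  EReal.continuousOn_toReal.comp (hK.continuousOn.mono sdiff_subset) fun s hs => by
    simp [hK.eq_coe_toR hs]

theorem eventually_le_of_eq_bot (hK : IsKernel K) (h0 : K 0 = ⊥) (c : ℝ) :
    ∀ᶠ s in 𝓝 0, K s ≤ c := by
  have : Tendsto K (𝓝 0) (𝓝 ⊥) :=
    h0 ▸ hK.continuousOn.continuousAt (Icc_mem_nhds (by norm_num) (by norm_num))
  exact (EReal.tendsto_nhds_bot_iff_real.1 this c).mono fun _ => le_of_lt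

end IsKernel

def IsStableOffNodes {n : ℕ} (F : (Fin n → ℝ) → ℝ → EReal) (δ η ε : ℝ) : Prop :=
  ∀ x ∈ closedSimplex n, ∀ y ∈ closedSimplex n, dist x y ≤ η → ∀ t ∈ Icc (0 : ℝ) 1,
    (∀ i, δ ≤ |t - x i|) → (∀ i, δ ≤ |t - y i|) → F x t ≤ F y t + ε

theorem IsStableOffNodes.mono {n : ℕ} {F : (Fin n → ℝ) → ℝ → EReal} {δ η η' ε : ℝ}
    (hF : IsStableOffNodes F δ η ε) (hη : η' ≤ η) : IsStableOffNodes F δ η' ε :=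
  fun x hx y hy hxy => hF x hx y hy (hxy.trans hη)

section SumOfTranslates

variable {n : ℕ} {K : Fin n → ℝ → EReal} {J : ℝ → EReal}

theorem SOT_eq_add_coe (hK : ∀ i, IsKernel (K i)) {x : Fin n → ℝ} {t : ℝ}
    (hx : ∀ i, t - x i ∈ Icc (-1 : ℝ) 1 \ {0}) :
    SOT K J x t = J t + ((∑ i, toR (K i) (t - x i) : ℝ) : EReal) := by
  rw [SOT, EReal.coe_finset_sum]
  exact congrArg (J t + ·) (Finset.sum_congr rfl fun i _ => (hK i).eq_coe_toR (hx i))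

theorem exists_forall_SOT_le (hK : ∀ i, IsKernel (K i))
    (hJ : ∃ M : ℝ, ∀ t ∈ Icc (0 : ℝ) 1, J t ≤ M) :
    ∃ B : ℝ, ∀ x : Fin n → ℝ, (∀ i, x i ∈ Icc (0 : ℝ) 1) →
      ∀ t ∈ Icc (0 : ℝ) 1, SOT K J x t ≤ B := by
  obtain ⟨M, hM⟩ := hJ
  choose C hC using fun i => (hK i).exists_forall_le
  refine ⟨M + ∑ i, C i, fun x hx t ht => ?_⟩
  rw [SOT, EReal.coe_add, EReal.coe_finset_sum]
  exact add_le_add (hM t ht)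
    (Finset.sum_le_sum fun i _ => hC i _ (sub_mem_Icc_neg_one_one (hx i) ht))

theorem exists_forall_SOT_le_of_near (hK : ∀ i, IsKernel (K i)) (hsing : ∀ i, K i 0 = ⊥)
    (hJ : ∃ M : ℝ, ∀ t ∈ Icc (0 : ℝ) 1, J t ≤ M) (c : ℝ) :
    ∃ δ > 0, ∀ x : Fin n → ℝ, (∀ i, x i ∈ Icc (0 : ℝ) 1) →
      ∀ t ∈ Icc (0 : ℝ) 1, ∀ i, |t - x i| < δ → SOT K J x t ≤ c := by
  obtain ⟨M, hM⟩ := hJ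
  choose C hC using fun i => (hK i).exists_forall_le
  set S : Fin n → ℝ := fun i => ∑ k ∈ Finset.univ.erase i, C k
  obtain ⟨δ, hδ, hnear⟩ := Metric.eventually_nhds_iff.1 <| eventually_all.2 fun i =>
    (hK i).eventually_le_of_eq_bot (hsing i) (c - M - S i)
  refine ⟨δ, hδ, fun x hx t ht i hti => ?_⟩
  have hrest : ∑ k ∈ Finset.univ.erase i, K k (t - x k) ≤ (S i : EReal) := by
    rw [EReal.coe_finset_sum]
    exact Finset.sum_le_sum fun k _ => hC k _ (sub_mem_Icc_neg_one_one (hx k) ht)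
  calc SOT K J x t = J t + (K i (t - x i) + ∑ k ∈ Finset.univ.erase i, K k (t - x k)) := by
        rw [SOT, Finset.add_sum_erase _ (fun k => K k (t - x k)) (Finset.mem_univ i)]
    _ ≤ M + ((c - M - S i : ℝ) + S i) :=
        add_le_add (hM t ht) (add_le_add (hnear (by simpa using hti) i) hrest)
    _ = c := by rw [← EReal.coe_add, ← EReal.coe_add]; ring_nf

theorem uniformContinuousOn_sum_toR (hK : ∀ i, IsKernel (K i)) {δ : ℝ} (hδ : 0 < δ) :
    UniformContinuousOn (fun p : (Fin n → ℝ) × ℝ => ∑ i, toR (K i) (p.2 - p.1 i))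
      {p | (∀ i, p.1 i ∈ Icc (0 : ℝ) 1) ∧ p.2 ∈ Icc (0 : ℝ) 1 ∧ ∀ i, δ ≤ |p.2 - p.1 i|} := by
  refine IsCompact.uniformContinuousOn_of_continuous ?_ ?_
  · refine ((isCompact_univ_pi fun _ => isCompact_Icc).prod isCompact_Icc).of_isClosed_subset
      ?_ fun p hp => ⟨fun i _ => hp.1 i, hp.2.1⟩
    simp only [ofPred_and, ofPred_forall]
    exact (isClosed_iInter fun i => isClosed_Icc.preimage (by fun_prop)).inter
      ((isClosed_Icc.preimage continuous_snd).inter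
        (isClosed_iInter fun i => isClosed_le continuous_const (by fun_prop)))
  · refine continuousOn_finsetSum _ fun i _ => (hK i).continuousOn_toR.comp
      (by fun_prop : Continuous fun p : (Fin n → ℝ) × ℝ => p.2 - p.1 i).continuousOn
      fun p hp => sub_mem_Icc_sdiff_zero (hp.1 i) hp.2.1 hδ (hp.2.2 i)

theorem exists_isStableOffNodes_SOT (hK : ∀ i, IsKernel (K i)) {δ ε : ℝ} (hδ : 0 < δ)
    (hε : 0 < ε) : ∃ η > 0, IsStableOffNodes (SOT K J) δ η ε := by
  obtain ⟨η, hη, hG⟩ :=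
    Metric.uniformContinuousOn_iff_le.1 (uniformContinuousOn_sum_toR hK hδ) ε hε
  refine ⟨η, hη, fun x hx y hy hxy t ht hxt hyt => ?_⟩
  have hGxy := hG (x, t) ⟨hx.2, ht, hxt⟩ (y, t) ⟨hy.2, ht, hyt⟩ (by simpa [Prod.dist_eq] using hxy)
  rw [SOT_eq_add_coe hK fun i => sub_mem_Icc_sdiff_zero (hx.2 i) ht hδ (hxt i),
    SOT_eq_add_coe hK fun i => sub_mem_Icc_sdiff_zero (hy.2 i) ht hδ (hyt i), add_assoc,
    ← EReal.coe_add]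
  gcongr
  exact_mod_cast (by linarith [(abs_le.1 (Real.dist_eq _ _ ▸ hGxy)).2])

end SumOfTranslates

theorem abs_apply_sub_le_dist {n : ℕ} (x y : Fin n → ℝ) (i : Fin n) :
    |x i - y i| ≤ dist x y := by
  simpa [Real.dist_eq] using dist_le_pi_dist x y i

theorem abs_sub_le_abs_sub_add_dist {n : ℕ} (t : ℝ) (x y : Fin n → ℝ) (i : Fin n) :
    |t - y i| ≤ |t - x i| + dist x y :=
  (abs_sub_le t (x i) (y i)).trans (by gcongr; exact abs_apply_sub_le_dist x y i)

section Intervals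

variable {n : ℕ} {x y : Fin n → ℝ}

theorem Ij_subset_Icc (hx : ∀ i, x i ∈ Icc (0 : ℝ) 1) (j : ℕ) : Ij x j ⊆ Icc 0 1 := by
  rintro t ⟨hlo, hhi⟩
  refine ⟨le_trans ?_ hlo, hhi.trans ?_⟩
  · unfold nodeLo
    split_ifs
    exacts [(hx _).1, le_rfl]
  · unfold nodeHi
    split_ifs
    exacts [(hx _).2, le_rfl]

theorem mem_Ij_of_forall_le_abs_sub {j : ℕ} {t η : ℝ} (ht : t ∈ Ij y j) (hxy : dist x y ≤ η)
    (hfar : ∀ i, η ≤ |t - y i|) : t ∈ Ij x j := by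
  have hxy' : ∀ i, |x i - y i| ≤ η := fun i => (abs_apply_sub_le_dist x y i).trans hxy
  obtain ⟨hlo, hhi⟩ := ht
  constructor
  · unfold nodeLo at hlo ⊢
    split_ifs at hlo ⊢ with h
    · have hfar' := hfar ⟨j - 1, by omega⟩
      rw [abs_of_nonneg (sub_nonneg.2 hlo)] at hfar'
      linarith [(abs_le.1 (hxy' ⟨j - 1, by omega⟩)).2]
    · exact hlo
  · unfold nodeHi at hhi ⊢
    split_ifs at hhi ⊢ with h
    · have hfar' := hfar ⟨j, h⟩
      rw [abs_of_nonpos (sub_nonpos.2 hhi)] at hfar'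
      linarith [(abs_le.1 (hxy' ⟨j, h⟩)).1]
    · exact hhi

end Intervals

def farSuperlevelSet {n : ℕ} (F : (Fin n → ℝ) → ℝ → EReal) (y : Fin n → ℝ) (j : ℕ) (δ c : ℝ) :
    Set ℝ :=
  {t | t ∈ Ij y j ∧ (∀ i, δ ≤ |t - y i|) ∧ (c : EReal) ≤ F y t}

section FarSuperlevelSet

variable {n : ℕ} {F : (Fin n → ℝ) → ℝ → EReal} {x y : Fin n → ℝ} {j : ℕ} {m q δ η c : ℝ}

theorem mem_Ij_of_mem_farSuperlevelSet {t : ℝ} (hxy : dist x y ≤ η) (hηδ : η ≤ δ / 4)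
    (ht : t ∈ farSuperlevelSet F y j (δ / 2) c) : t ∈ Ij x j ∧ ∀ i, δ / 4 ≤ |t - x i| := by
  have hδ : 0 ≤ δ := by linarith [dist_nonneg (x := x) (y := y)]
  obtain ⟨htI, hfar, -⟩ := ht
  refine ⟨mem_Ij_of_forall_le_abs_sub htI hxy fun i => ?_, fun i => ?_⟩
  · linarith [hfar i]
  · linarith [hfar i, abs_sub_le_abs_sub_add_dist t x y i]

theorem coe_sub_le_of_mem_farSuperlevelSet (hF : IsStableOffNodes F (δ / 4) η (q / 8))
    (hx : x ∈ closedSimplex n) (hy : y ∈ closedSimplex n) (hxy : dist x y ≤ η)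
    (hηδ : η ≤ δ / 4) {t c' : ℝ} (ht : t ∈ farSuperlevelSet F y j (δ / 2) c')
    (hc : (c : EReal) ≤ F y t) : ((c - q / 8 : ℝ) : EReal) ≤ F x t := by
  have hδ : 0 ≤ δ := by linarith [dist_nonneg (x := x) (y := y)]
  have hshift := hF y hy x hx (dist_comm x y ▸ hxy) t (Ij_subset_Icc hy.2 j ht.1)
    (fun i => by linarith [ht.2.1 i]) (mem_Ij_of_mem_farSuperlevelSet hxy hηδ ht).2
  rw [EReal.coe_sub]
  exact EReal.sub_le_of_le_add (hc.trans hshift)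

theorem exists_mem_farSuperlevelSet_coe_le (hF : IsStableOffNodes F (δ / 4) η (q / 8))
    (hnear : ∀ x ∈ closedSimplex n, ∀ t ∈ Ij x j, ∀ i, |t - x i| < δ → F x t ≤ (m - q : ℝ))
    (hx : x ∈ closedSimplex n) (hy : y ∈ closedSimplex n) (hxy : dist x y ≤ η)
    (hηδ : η ≤ δ / 4) (hq : 0 < q) (hm : ⨆ t ∈ Ij y j, F y t = m) :
    ∃ t ∈ farSuperlevelSet F y j (δ / 2) (m - q / 2), ((m - q / 4 : ℝ) : EReal) ≤ F x t := by
  have hδ : 0 ≤ δ := by linarith [dist_nonneg (x := x) (y := y)]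
  obtain ⟨t, ht, hlt⟩ : ∃ t ∈ Ij y j, ((m - q / 8 : ℝ) : EReal) < F y t := by
    rw [← lt_biSup_iff, hm]
    exact_mod_cast (by linarith : m - q / 8 < m)
  have hty : ∀ i, δ ≤ |t - y i| := fun i => not_lt.1 fun hi => by
    have := hlt.trans_le (hnear y hy t ht i hi)
    norm_cast at this
    linarith
  have htZ : t ∈ farSuperlevelSet F y j (δ / 2) (m - q / 2) :=
    ⟨ht, fun i => by linarith [hty i], le_trans (by exact_mod_cast (by linarith)) hlt.le⟩
  refine ⟨t, htZ, le_trans ?_ (coe_sub_le_of_mem_farSuperlevelSet hF hx hy hxy hηδ htZ hlt.le)⟩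
  exact_mod_cast (by linarith)

theorem le_coe_of_notMem_farSuperlevelSet (hF : IsStableOffNodes F (δ / 4) η (q / 8))
    (hnear : ∀ x ∈ closedSimplex n, ∀ t ∈ Ij x j, ∀ i, |t - x i| < δ → F x t ≤ (m - q : ℝ))
    (hx : x ∈ closedSimplex n) (hy : y ∈ closedSimplex n) (hxy : dist x y ≤ η)
    (hηδ : η ≤ δ / 4) (hq : 0 < q) {t : ℝ} (ht : t ∈ Ij x j)
    (htZ : t ∉ farSuperlevelSet F y j (δ / 2) (m - q / 2)) :
    F x t ≤ ((m - q / 4 : ℝ) : EReal) := by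
  have hδ : 0 ≤ δ := by linarith [dist_nonneg (x := x) (y := y)]
  by_cases hnx : ∃ i, |t - x i| < δ
  · obtain ⟨i, hi⟩ := hnx
    exact (hnear x hx t ht i hi).trans (by exact_mod_cast (by linarith))
  push Not at hnx
  have hty : ∀ i, δ / 2 ≤ |t - y i| := fun i => by
    linarith [hnx i, abs_sub_le_abs_sub_add_dist t y x i, dist_comm x y]
  have htI : t ∈ Ij y j :=
    mem_Ij_of_forall_le_abs_sub ht (dist_comm x y ▸ hxy) fun i => by linarith [hnx i]
  have hlow : F y t < ((m - q / 2 : ℝ) : EReal) := not_le.1 fun h => htZ ⟨htI, hty, h⟩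
  calc F x t ≤ F y t + (q / 8 : ℝ) :=
        hF x hx y hy hxy t (Ij_subset_Icc hx.2 j ht) (fun i => by linarith [hnx i])
          fun i => by linarith [hty i]
    _ ≤ ((m - q / 2 : ℝ) : EReal) + (q / 8 : ℝ) := by gcongr
    _ ≤ (m - q / 4 : ℝ) := by
        rw [← EReal.coe_add]
        exact_mod_cast (by linarith)

theorem biSup_farSuperlevelSet_le (hF : IsStableOffNodes F (δ / 4) η (q / 8))
    (hx : x ∈ closedSimplex n) (hy : y ∈ closedSimplex n) (hxy : dist x y ≤ η)
    (hηδ : η ≤ δ / 4) (hm : ⨆ t ∈ Ij y j, F y t = m) :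
    ⨆ t ∈ farSuperlevelSet F y j (δ / 2) c, F x t ≤ ((m + q / 8 : ℝ) : EReal) := by
  have hδ : 0 ≤ δ := by linarith [dist_nonneg (x := x) (y := y)]
  refine iSup₂_le fun t ht => ?_
  calc
    F x t ≤ F y t + (q / 8 : ℝ) :=
      hF x hx y hy hxy t (Ij_subset_Icc hy.2 j ht.1)
        (mem_Ij_of_mem_farSuperlevelSet hxy hηδ ht).2 fun i => by linarith [ht.2.1 i]
    _ ≤ (m : EReal) + (q / 8 : ℝ) := by
        gcongr
        exact hm ▸ le_iSup₂ (f := fun t _ => F y t) t ht.1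
    _ = _ := (EReal.coe_add _ _).symm

theorem biSup_Ij_eq_biSup_farSuperlevelSet (hF : IsStableOffNodes F (δ / 4) η (q / 8))
    (hnear : ∀ x ∈ closedSimplex n, ∀ t ∈ Ij x j, ∀ i, |t - x i| < δ → F x t ≤ (m - q : ℝ))
    (hx : x ∈ closedSimplex n) (hy : y ∈ closedSimplex n) (hxy : dist x y ≤ η)
    (hηδ : η ≤ δ / 4) (hq : 0 < q) (hm : ⨆ t ∈ Ij y j, F y t = m) :
    ⨆ t ∈ Ij x j, F x t = ⨆ t ∈ farSuperlevelSet F y j (δ / 2) (m - q / 2), F x t := by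
  obtain ⟨t₀, ht₀, hlow⟩ := exists_mem_farSuperlevelSet_coe_le hF hnear hx hy hxy hηδ hq hm
  exact biSup_eq_biSup_of_forall_notMem_le
    (fun t ht => (mem_Ij_of_mem_farSuperlevelSet hxy hηδ ht).1)
    (hlow.trans (le_iSup₂ (f := fun t _ => F x t) t₀ ht₀))
    fun t ht htZ => le_coe_of_notMem_farSuperlevelSet hF hnear hx hy hxy hηδ hq ht htZ

theorem biSup_Ij_sub_le_of_mem_farSuperlevelSet
    (hF : IsStableOffNodes F (δ / 4) η (q / 8))
    (hnear : ∀ x ∈ closedSimplex n, ∀ t ∈ Ij x j, ∀ i, |t - x i| < δ → F x t ≤ (m - q : ℝ))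
    (hx : x ∈ closedSimplex n) (hy : y ∈ closedSimplex n) (hxy : dist x y ≤ η)
    (hηδ : η ≤ δ / 4) (hq : 0 < q) (hm : ⨆ t ∈ Ij y j, F y t = m) {t : ℝ}
    (ht : t ∈ farSuperlevelSet F y j (δ / 2) (m - q / 2)) :
    (⨆ t ∈ Ij x j, F x t) - q ≤ F x t ∧ ⊥ < (⨆ t ∈ Ij x j, F x t) - q := by
  rw [biSup_Ij_eq_biSup_farSuperlevelSet hF hnear hx hy hxy hηδ hq hm]
  refine ⟨EReal.sub_le_of_le_add ?_, ?_⟩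
  · calc _ ≤ ((m + q / 8 : ℝ) : EReal) := biSup_farSuperlevelSet_le hF hx hy hxy hηδ hm
      _ ≤ ((m - q / 2 - q / 8 : ℝ) : EReal) + q := by
          rw [← EReal.coe_add]
          exact_mod_cast (by linarith)
      _ ≤ F x t + q := by
          gcongr
          exact coe_sub_le_of_mem_farSuperlevelSet hF hx hy hxy hηδ ht ht.2.2
  · obtain ⟨t₀, ht₀, hlow⟩ := exists_mem_farSuperlevelSet_coe_le hF hnear hx hy hxy hηδ hq hm
    calc ⊥ < ((m - q / 4 : ℝ) : EReal) - q := by rw [← EReal.coe_sub]; exact EReal.bot_lt_coe _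
      _ ≤ _ := EReal.sub_le_sub (hlow.trans (le_iSup₂ (f := fun t _ => F x t) t₀ ht₀)) le_rfl

end FarSuperlevelSet

theorem Zq_lemma_general
    {n : ℕ} (K : Fin n → ℝ → EReal) (J : ℝ → EReal)
    (hK : ∀ i, IsKernel (K i)) (hsing : ∀ i, K i 0 = ⊥) (hJ : IsNField n J)
    (j : ℕ) :
    ∀ q : ℝ, 0 < q → ∀ y ∈ closedSimplex n, mj K J y j ≠ ⊥ →
      ∃ η > (0:ℝ), ∃ Z : Set ℝ, Z ⊆ Ij y j ∧
        ∀ x ∈ closedSimplex n, dist x y ≤ η →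
          (Z ⊆ Ij x j ∧ ∀ t ∈ Z, ∀ i, η ≤ |t - x i|) ∧
          mj K J x j = (⨆ t ∈ Z, SOT K J x t) ∧
          ∀ t ∈ Z, mj K J x j - (q : EReal) ≤ SOT K J x t ∧
            ⊥ < mj K J x j - (q : EReal) := by
  intro q hq y hy hmy
  obtain ⟨B, hB⟩ := exists_forall_SOT_le hK hJ.bdd
  obtain ⟨m, hm⟩ : ∃ m : ℝ, mj K J y j = m :=
    ⟨_, (EReal.coe_toReal (ne_top_of_le_ne_top (EReal.coe_ne_top B)
      (iSup₂_le fun t ht => hB y hy.2 t (Ij_subset_Icc hy.2 j ht))) hmy).symm⟩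
  obtain ⟨δ, hδ, hnear⟩ := exists_forall_SOT_le_of_near hK hsing hJ.bdd (m - q)
  obtain ⟨η, hη, hF⟩ := exists_isStableOffNodes_SOT hK (J := J) (by positivity : 0 < δ / 4)
    (by positivity : 0 < q / 8)
  have hnear' : ∀ x ∈ closedSimplex n, ∀ t ∈ Ij x j, ∀ i, |t - x i| < δ →
      SOT K J x t ≤ (m - q : ℝ) := fun x hx t ht => hnear x hx.2 t (Ij_subset_Icc hx.2 j ht)
  have hηδ : min η (δ / 4) ≤ δ / 4 := min_le_right _ _
  have hF' := hF.mono (min_le_left η (δ / 4))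
  set Z := farSuperlevelSet (SOT K J) y j (δ / 2) (m - q / 2)
  refine ⟨min η (δ / 4), by positivity, Z, fun t ht => ht.1, fun x hx hxy => ?_⟩
  have hZx : ∀ t ∈ Z, t ∈ Ij x j ∧ ∀ i, δ / 4 ≤ |t - x i| := fun t ht =>
    mem_Ij_of_mem_farSuperlevelSet hxy hηδ ht
  exact ⟨⟨fun t ht => (hZx t ht).1, fun t ht i => hηδ.trans ((hZx t ht).2 i)⟩,
    biSup_Ij_eq_biSup_farSuperlevelSet hF' hnear' hx hy hxy hηδ hq hm,
    fun t ht => biSup_Ij_sub_le_of_mem_farSuperlevelSet hF' hnear' hx hy hxy hηδ hq hm ht⟩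

/-- (Lemma 3.4, the **Z-q lemma**.) For singular kernels and an arbitrary
`n`-field function: for every `q > 0` and every `y ∈ S̄` with `m_j(y) ≠ -∞` there are
`η > 0` and a set `Z ⊆ I_j(y)` such that for each `x ∈ S̄` with `‖x - y‖ ≤ η`:
(i) `Z ⊆ I_j(x)` and `Z` has distance at least `η` to `{x_1,…,x_n}`;
(ii) `m_j(x) = sup_{t ∈ Z} F(x,t)`;
(iii) `F(x,t) ≥ m_j(x) - q > -∞` for every `t ∈ Z`. -/
theorem Zq_lemma
    {n : ℕ} (hn : 1 ≤ n) (K : Fin n → ℝ → EReal) (J : ℝ → EReal)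
    (hK : ∀ i, IsKernel (K i)) (hsing : ∀ i, K i 0 = ⊥) (hJ : IsNField n J)
    (j : ℕ) (hj : j ≤ n) :
    ∀ q : ℝ, 0 < q → ∀ y ∈ closedSimplex n, mj K J y j ≠ ⊥ →
      ∃ η > (0:ℝ), ∃ Z : Set ℝ, Z ⊆ Ij y j ∧
        ∀ x ∈ closedSimplex n, dist x y ≤ η →
          (Z ⊆ Ij x j ∧ ∀ t ∈ Z, ∀ i, η ≤ |t - x i|) ∧
          mj K J x j = (⨆ t ∈ Z, SOT K J x t) ∧
          ∀ t ∈ Z, mj K J x j - (q : EReal) ≤ SOT K J x t ∧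
            ⊥ < mj K J x j - (q : EReal) :=
  Zq_lemma_general K J hK hsing hJ j

end
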